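/- arXiv:math/0405365 — 2 statements merged into one kernel-verified Lean document; each statement's English description precedes it below -/
import Mathlib

section
/- Let m > 0 be an integer, j, l integers with 0 < j < 2m, and set α = (2m - j)/(2m), r = sqrt((2m - j)/j), z = r e^{iθ}. Then the two conditions 2m(α - 1) = -j and m((α - 1)z - α z⁻¹ - 1) = -l (with Im z > 0) hold if and only if cos θ = (l - m)/sqrt(j(2m - j)) and |l - m| < sqrt(j(2m - j)); moreover the condition (j,l) ∈ ℤ², |l - m| < sqrt(j(2m - j)) with 0 < j < 2m is equivalent to (j - m)² + (l - m)² < m². -/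
open Complex

set_option maxHeartbeats 1000000 in
/-- Characterization of the double-periodicity conditions for the pole `z = r e^{iθ}`
with `α = (2m-j)/(2m)`, `r = √((2m-j)/j)`: the conditions `2m(α-1) = -j` and
`m((α-1)z - αz⁻¹ - 1) = -l` hold iff `cos θ = (l-m)/√(j(2m-j))` and
`|l-m| < √(j(2m-j))`; moreover the latter inequality is equivalent to
`(j-m)² + (l-m)² < m²`. -/
theorem double_periodicity_conditions (m j l : ℤ) (hm : 0 < m) (hj : 0 < j) (hj2 : j < 2 * m)
    (α r θ : ℝ) (hα : α = ((2 * m - j : ℤ) : ℝ) / ((2 * m : ℤ) : ℝ))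
    (hr : r = Real.sqrt (((2 * m - j : ℤ) : ℝ) / (j : ℝ)))
    (z : ℂ) (hz : z = (r : ℂ) * Complex.exp ((θ : ℂ) * Complex.I))
    (hθ : 0 < Real.sin θ) :
    ((2 * (m : ℂ) * ((α : ℂ) - 1) = -(j : ℂ) ∧
        (m : ℂ) * (((α : ℂ) - 1) * z - (α : ℂ) * z⁻¹ - 1) = -(l : ℂ)) ↔
      (Real.cos θ = ((l : ℝ) - (m : ℝ)) / Real.sqrt ((j : ℝ) * ((2 * m - j : ℤ) : ℝ)) ∧
        |(l : ℝ) - (m : ℝ)| < Real.sqrt ((j : ℝ) * ((2 * m - j : ℤ) : ℝ)))) ∧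
    (|(l : ℝ) - (m : ℝ)| < Real.sqrt ((j : ℝ) * ((2 * m - j : ℤ) : ℝ)) ↔
      (j - m) ^ 2 + (l - m) ^ 2 < m ^ 2) := by
  have hjR : (0:ℝ) < (j:ℝ) := by exact_mod_cast hj
  have h2mjZ : (0:ℤ) < 2*m - j := by omega
  have h2mjR : (0:ℝ) < ((2*m - j : ℤ):ℝ) := by exact_mod_cast h2mjZ
  obtain ⟨s, hsdef⟩ : ∃ s : ℝ, s = Real.sqrt ((j : ℝ) * ((2 * m - j : ℤ) : ℝ)) := ⟨_, rfl⟩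
  rw [← hsdef]
  have hs0 : 0 < s := hsdef ▸ Real.sqrt_pos.mpr (by positivity)
  have hs2 : s ^ 2 = (j:ℝ) * ((2*m - j : ℤ):ℝ) := hsdef ▸ Real.sq_sqrt (by positivity)
  have hr0 : 0 < r := by rw [hr]; exact Real.sqrt_pos.mpr (by positivity)
  have hr2 : r ^ 2 = ((2*m - j : ℤ):ℝ) / (j:ℝ) := by
    rw [hr]; exact Real.sq_sqrt (by positivity)
  have hjr : (j:ℝ) * r = s := by
    have hjne : (j:ℝ) ≠ 0 := ne_of_gt hjR
    have h1 : ((j:ℝ)*r)^2 = s^2 := by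
      rw [mul_pow, hr2, hs2]; field_simp
    have h2 : (0:ℝ) ≤ (j:ℝ)*r := by positivity
    rw [← Real.sqrt_sq h2, h1, Real.sqrt_sq hs0.le]
  have hjr2 : (j:ℝ) * r ^ 2 = ((2*m - j : ℤ):ℝ) := by
    rw [hr2]; field_simp
  have h2mr : ((2*m - j : ℤ):ℝ) * r⁻¹ = s := by
    have hrne : r ≠ 0 := ne_of_gt hr0
    rw [← hjr]
    field_simp
    have h := hjr2
    push_cast at h ⊢
    first
      | linear_combination h
      | linear_combination -h
  have hmR : (0:ℝ) < (m:ℝ) := by exact_mod_cast hm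
  have hmC : ((m:ℂ)) ≠ 0 := by exact_mod_cast (ne_of_gt hmR)
  have hz' : z = ((r * Real.cos θ : ℝ) : ℂ) + ((r * Real.sin θ : ℝ) : ℂ) * Complex.I := by
    rw [hz, Complex.exp_mul_I, ← Complex.ofReal_cos, ← Complex.ofReal_sin]
    push_cast
    ring
  have hrC : ((r:ℝ):ℂ) ≠ 0 := by exact_mod_cast ne_of_gt hr0
  have hzinv : z⁻¹ = ((r⁻¹ * Real.cos θ : ℝ) : ℂ) - ((r⁻¹ * Real.sin θ : ℝ) : ℂ) * Complex.I := by
    rw [hz, mul_inv, ← Complex.exp_neg]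
    rw [show -((θ:ℂ) * Complex.I) = ((-θ : ℝ):ℂ) * Complex.I by push_cast; ring]
    rw [Complex.exp_mul_I, ← Complex.ofReal_cos, ← Complex.ofReal_sin,
      Real.cos_neg, Real.sin_neg]
    push_cast
    ring
  have hcond1 : 2 * (m : ℂ) * ((α : ℂ) - 1) = -(j : ℂ) := by
    rw [hα]; push_cast; field_simp; ring
  have hA : (m:ℂ) * ((α:ℂ) - 1) = -(j:ℂ)/2 := by
    rw [hα]; push_cast; field_simp; ring
  have hB : (m:ℂ) * (α:ℂ) = (2*(m:ℂ) - (j:ℂ))/2 := by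
    rw [hα]; push_cast; field_simp
  have key : ((m : ℂ) * (((α : ℂ) - 1) * z - (α : ℂ) * z⁻¹ - 1) = -(l : ℂ)) ↔
      s * Real.cos θ = (l:ℝ) - (m:ℝ) := by
    have hjrC : (((j:ℝ)) : ℂ) * (r:ℂ) = (s:ℂ) := by exact_mod_cast hjr
    have h2mrC : ((((2*m - j : ℤ):ℝ)) : ℂ) * ((r:ℝ):ℂ)⁻¹ = (s:ℂ) := by exact_mod_cast h2mr
    push_cast at hjrC h2mrC
    have hexp : (m : ℂ) * (((α : ℂ) - 1) * z - (α : ℂ) * z⁻¹ - 1) =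
        (((-(s * Real.cos θ) - m : ℝ)) : ℂ) := by
      rw [hzinv, hz']
      push_cast
      linear_combination (((r:ℂ) * Complex.cos (θ:ℂ)) + ((r:ℂ) * Complex.sin (θ:ℂ)) * Complex.I) * hA
        - (((r:ℂ)⁻¹ * Complex.cos (θ:ℂ)) - ((r:ℂ)⁻¹ * Complex.sin (θ:ℂ)) * Complex.I) * hB
        - ((Complex.cos (θ:ℂ) + Complex.sin (θ:ℂ) * Complex.I)/2) * hjrC
        - ((Complex.cos (θ:ℂ) - Complex.sin (θ:ℂ) * Complex.I)/2) * h2mrC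
    rw [hexp, show -(l:ℂ) = (((-(l:ℝ)):ℝ):ℂ) by push_cast; ring, Complex.ofReal_inj]
    constructor <;> intro h <;> linarith
  constructor
  · constructor
    · rintro ⟨-, h2⟩
      have hsc := key.mp h2
      have hcsq : Real.cos θ ^ 2 < 1 := by
        nlinarith [Real.sin_sq_add_cos_sq θ, hθ]
      refine ⟨by rw [eq_div_iff (ne_of_gt hs0)]; linarith [hsc, mul_comm s (Real.cos θ)], ?_⟩
      have h4 : ((l:ℝ) - (m:ℝ))^2 = s^2 * Real.cos θ^2 := by rw [← hsc]; ring
      have h5 : s^2 * Real.cos θ^2 < s^2 := by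
        have := mul_lt_mul_of_pos_left hcsq (pow_pos hs0 2)
        linarith
      have habs2 : ((l:ℝ) - (m:ℝ))^2 < s^2 := by linarith
      exact abs_lt.mpr ⟨by nlinarith, by nlinarith⟩
    · rintro ⟨hcos, -⟩
      refine ⟨hcond1, key.mpr ?_⟩
      rw [hcos]
      field_simp
  · rw [hsdef, Real.lt_sqrt (abs_nonneg _), _root_.sq_abs]
    constructor
    · intro h
      have hZR : (((l - m : ℤ)^2 : ℤ) : ℝ) < ((j * (2*m - j) : ℤ) : ℝ) := by
        push_cast
        push_cast at h
        nlinarith [h]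
      have hZ : (l - m)^2 < j * (2*m - j) := by exact_mod_cast hZR
      nlinarith [hZ]
    · intro h
      have hZ : (l - m)^2 < j * (2*m - j) := by nlinarith [h]
      have hZR : (((l - m : ℤ)^2 : ℤ) : ℝ) < ((j * (2*m - j) : ℤ) : ℝ) := by exact_mod_cast hZ
      push_cast at hZR ⊢
      nlinarith [hZR]
end

section
/- Let z = r e^{iθ} with r > 0, r ≠ 1, sin θ ≠ 0, and suppose there exist integers m₁, m₂ with m₂ ≠ 0 such that 2cos θ/(r - r⁻¹) = (2π m₁ + m₂ c₁)/(m₂ c₂), where τ = c₁ + i c₂, c₂ ≠ 0. Then for T = m₂ c₂ (r + r⁻¹)/(r - r⁻¹), the increment w(x, y, t + T) - w(x, y, t) = ((z + z⁻¹)/2)·T lies in the lattice Λ' generated by 2π and a + ib := c₁ + ((z - z⁻¹)/2) c₂, so any function of the form f(w(x,y,t)) with f elliptic of periods 2π and a + ib is periodic in t with period T. -/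
open Complex

lemma time_aux (x E : ℂ) (a k P : ℂ) (hx : x ≠ 0) (hs : x - x⁻¹ ≠ 0)
    (hcos : a * 2 = E + E⁻¹) (keyC : 2 * a * k = (x - x⁻¹) * P) :
    (x*E + x⁻¹*E⁻¹)/2 * (k * (x + x⁻¹) / (x - x⁻¹)) = P + k * ((x*E - x⁻¹*E⁻¹)/2) := by
  have hss : (x - x⁻¹) * (x - x⁻¹)⁻¹ = 1 := mul_inv_cancel₀ hs
  have hxx : x * x⁻¹ = 1 := mul_inv_cancel₀ hx
  linear_combination ((k/2)*(x+x⁻¹)*((E-E⁻¹)/2) + (k/2)*a*(x-x⁻¹) + P) * hss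
    + (2*k*a*(x-x⁻¹)⁻¹) * hxx + (x-x⁻¹)⁻¹ * keyC
    + (-k*(x+x⁻¹)^2*(x-x⁻¹)⁻¹/4 + k*(x-x⁻¹)/4) * hcos

/-- Time periodicity for `r ≠ 1`: under the rationality condition
`2cosθ/(r-r⁻¹) = (2πm₁ + m₂c₁)/(m₂c₂)`, with `T = m₂c₂(r+r⁻¹)/(r-r⁻¹)` the time
increment `w(x,y,t+T) - w(x,y,t) = ((z+z⁻¹)/2)T` lies in the lattice generated by
`2π` and `a+ib = c₁ + ((z-z⁻¹)/2)c₂`, so any `f ∘ w` with `f` elliptic of those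
periods is `T`-periodic in `t`. -/
theorem time_periodicity_lattice (r θ : ℝ) (hr : 0 < r) (hr1 : r ≠ 1)
    (hθ : Real.sin θ ≠ 0)
    (z : ℂ) (hz : z = (r : ℂ) * Complex.exp ((θ : ℂ) * Complex.I))
    (c₁ c₂ : ℝ) (hc₂ : c₂ ≠ 0) (m₁ m₂ : ℤ) (hm₂ : m₂ ≠ 0)
    (hrat : 2 * Real.cos θ / (r - r⁻¹) = (2 * Real.pi * m₁ + m₂ * c₁) / (m₂ * c₂))
    (T : ℝ) (hT : T = m₂ * c₂ * (r + r⁻¹) / (r - r⁻¹))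
    (w : ℝ → ℝ → ℝ → ℂ)
    (hw : ∀ x y t : ℝ, w x y t
      = (x : ℂ) + ((z - z⁻¹) / 2) * (y : ℂ) + ((z + z⁻¹) / 2) * (t : ℂ)) :
    (∀ x y t : ℝ, w x y (t + T) - w x y t = ((z + z⁻¹) / 2) * (T : ℂ)) ∧
    (∃ p q : ℤ, ((z + z⁻¹) / 2) * (T : ℂ)
        = (p : ℂ) * (2 * Real.pi) + (q : ℂ) * ((c₁ : ℂ) + ((z - z⁻¹) / 2) * (c₂ : ℂ))) ∧
    (∀ f : ℂ → ℂ, (∀ u : ℂ, f (u + 2 * Real.pi) = f u) →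
      (∀ u : ℂ, f (u + ((c₁ : ℂ) + ((z - z⁻¹) / 2) * (c₂ : ℂ))) = f u) →
      ∀ x y t : ℝ, f (w x y (t + T)) = f (w x y t)) := by
  have hr0 : r ≠ 0 := ne_of_gt hr
  have hs : r - r⁻¹ ≠ 0 := by
    intro h
    apply hr1
    have : r * r = 1 := by field_simp at h; nlinarith
    nlinarith
  have hm₂' : (m₂ : ℝ) ≠ 0 := Int.cast_ne_zero.mpr hm₂
  have keyR : 2 * Real.cos θ * ((m₂:ℝ) * c₂) = (r - r⁻¹) * (2 * Real.pi * m₁ + m₂ * c₁) := by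
    have := (div_eq_div_iff hs (mul_ne_zero hm₂' hc₂)).mp hrat
    linarith
  set E : ℂ := Complex.exp ((θ : ℂ) * Complex.I) with hE
  have hEinv : E⁻¹ = Complex.exp (-((θ : ℂ) * Complex.I)) := by
    rw [hE, ← Complex.exp_neg]
  have hcos : ((Real.cos θ : ℂ)) * 2 = E + E⁻¹ := by
    rw [hEinv, hE, Complex.ofReal_cos, Complex.cos]
    ring
  have hrC : (r : ℂ) ≠ 0 := by exact_mod_cast hr0
  have hzinv : z⁻¹ = (r : ℂ)⁻¹ * E⁻¹ := by rw [hz, mul_inv]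
  have hsC : (r : ℂ) - (r : ℂ)⁻¹ ≠ 0 := by
    rw [← Complex.ofReal_inv, ← Complex.ofReal_sub]
    exact_mod_cast hs
  have keyC : 2 * (Real.cos θ : ℂ) * ((m₂:ℂ) * (c₂:ℂ))
      = ((r:ℂ) - (r:ℂ)⁻¹) * (2 * (Real.pi:ℂ) * (m₁:ℂ) + (m₂:ℂ) * (c₁:ℂ)) := by
    have := congrArg (Complex.ofReal) keyR
    push_cast at this
    rw [Complex.ofReal_cos]
    linear_combination this
  have key2 : ((z + z⁻¹) / 2) * (T : ℂ)
      = (m₁ : ℂ) * (2 * Real.pi) + (m₂ : ℂ) * ((c₁ : ℂ) + ((z - z⁻¹) / 2) * (c₂ : ℂ)) := by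
    have aux := time_aux (r:ℂ) E (Real.cos θ : ℂ) ((m₂:ℂ)*(c₂:ℂ))
      (2 * (Real.pi:ℂ) * (m₁:ℂ) + (m₂:ℂ) * (c₁:ℂ)) hrC hsC hcos keyC
    rw [hzinv, hz, hT]
    push_cast
    linear_combination aux
  refine ⟨?_, ⟨m₁, m₂, key2⟩, ?_⟩
  · intro x y t
    rw [hw, hw]
    push_cast
    ring
  · intro f h1 h2 x y t
    have P1 : Function.Periodic f (2 * Real.pi) := h1
    have P2 : Function.Periodic f ((c₁ : ℂ) + ((z - z⁻¹) / 2) * (c₂ : ℂ)) := h2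
    have e2 : w x y (t + T) = (w x y t + (m₁ : ℂ) * (2 * Real.pi))
        + (m₂ : ℂ) * ((c₁ : ℂ) + ((z - z⁻¹) / 2) * (c₂ : ℂ)) := by
      rw [hw, hw]
      push_cast
      linear_combination key2
    rw [e2, (P2.int_mul m₂) (w x y t + (m₁ : ℂ) * (2 * Real.pi)),
      (P1.int_mul m₁) (w x y t)]
end
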